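/- arXiv:math/0202099 — 3 statements merged into one kernel-verified Lean document; each statement's English description precedes it below -/
import Mathlib

section
/- Let φ: V → W be an injective linear map. Then for every Dirac structure L on V, the composite 𝔅φ(𝔉φ(L)) = L, where 𝔉φ and 𝔅φ are the forward and backward images of Dirac structures along φ. -/
open Module LinearMap

variable {V W U : Type*} [AddCommGroup V] [Module ℝ V] [FiniteDimensional ℝ V]
  [AddCommGroup W] [Module ℝ W] [FiniteDimensional ℝ W]
  [AddCommGroup U] [Module ℝ U] [FiniteDimensional ℝ U]

/-- The canonical symmetric pairing on `V ⊕ V*`. -/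
noncomputable def diracPairing (p q : V × Module.Dual ℝ V) : ℝ := (p.2 q.1 + q.2 p.1) / 2

/-- A subspace of `V ⊕ V*` is isotropic if the pairing vanishes on it. -/
def IsIsotropic (L : Submodule ℝ (V × Module.Dual ℝ V)) : Prop :=
  ∀ p ∈ L, ∀ q ∈ L, diracPairing p q = 0

/-- A Dirac structure: a maximally isotropic subspace. -/
def IsDirac (L : Submodule ℝ (V × Module.Dual ℝ V)) : Prop :=
  IsIsotropic L ∧ ∀ L' : Submodule ℝ (V × Module.Dual ℝ V), IsIsotropic L' → L ≤ L' → L' = L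

/-- The graph of a bivector `π : V* → V`. -/
def graphBiv (π : Module.Dual ℝ V →ₗ[ℝ] V) : Submodule ℝ (V × Module.Dual ℝ V) where
  carrier := {p | p.1 = π p.2}
  add_mem' := by
    intro a b ha hb
    simp only [Set.mem_setOf_eq, Prod.fst_add, Prod.snd_add, map_add] at *
    rw [ha, hb]
  zero_mem' := by simp
  smul_mem' := by
    intro c a ha
    simp only [Set.mem_setOf_eq, Prod.smul_fst, Prod.smul_snd, map_smul] at *
    rw [ha]

/-- Forward image of a Dirac structure along a linear map. -/
def Fwd (φ : V →ₗ[ℝ] W) (L : Submodule ℝ (V × Module.Dual ℝ V)) :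
    Submodule ℝ (W × Module.Dual ℝ W) where
  carrier := {q | ∃ x : V, q.1 = φ x ∧ (x, φ.dualMap q.2) ∈ L}
  add_mem' := by
    rintro a b ⟨x, hx, hxL⟩ ⟨y, hy, hyL⟩
    refine ⟨x + y, ?_, ?_⟩
    · simp [Prod.fst_add, hx, hy]
    · simpa [Prod.snd_add, Prod.mk_add_mk] using L.add_mem hxL hyL
  zero_mem' := ⟨0, by simp, by simp; exact L.zero_mem⟩
  smul_mem' := by
    rintro c a ⟨x, hx, hxL⟩
    refine ⟨c • x, ?_, ?_⟩
    · simp [Prod.smul_fst, hx]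
    · simpa [Prod.smul_snd, Prod.smul_mk] using L.smul_mem c hxL

/-- Backward image of a Dirac structure along a linear map. -/
def Bwd (φ : V →ₗ[ℝ] W) (L : Submodule ℝ (W × Module.Dual ℝ W)) :
    Submodule ℝ (V × Module.Dual ℝ V) where
  carrier := {p | ∃ η : Module.Dual ℝ W, p.2 = φ.dualMap η ∧ (φ p.1, η) ∈ L}
  add_mem' := by
    rintro a b ⟨x, hx, hxL⟩ ⟨y, hy, hyL⟩
    refine ⟨x + y, ?_, ?_⟩
    · simp [Prod.snd_add, hx, hy]
    · simpa [Prod.fst_add, Prod.mk_add_mk] using L.add_mem hxL hyL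
  zero_mem' := ⟨0, by simp, by simp; exact L.zero_mem⟩
  smul_mem' := by
    rintro c a ⟨x, hx, hxL⟩
    refine ⟨c • x, ?_, ?_⟩
    · simp [Prod.smul_snd, hx]
    · simpa [Prod.smul_fst, Prod.smul_mk] using L.smul_mem c hxL

/-- Gauge transformation of a Dirac structure by a 2-form `B : V → V*`. -/
def tau (B : V →ₗ[ℝ] Module.Dual ℝ V) (L : Submodule ℝ (V × Module.Dual ℝ V)) :
    Submodule ℝ (V × Module.Dual ℝ V) where
  carrier := {p | (p.1, p.2 - B p.1) ∈ L}
  add_mem' := by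
    intro a b ha hb
    have := L.add_mem ha hb
    simpa [Prod.mk_add_mk, Prod.fst_add, Prod.snd_add, map_add, add_sub_add_comm] using this
  zero_mem' := by simp; exact L.zero_mem
  smul_mem' := by
    intro c a ha
    have := L.smul_mem c ha
    simpa [Prod.smul_mk, Prod.smul_fst, Prod.smul_snd, smul_sub] using this

/-- Orthogonal of a subspace with respect to a bilinear form `Ω : V → V*`. -/
def orth (Ω : V →ₗ[ℝ] Module.Dual ℝ V) (S : Submodule ℝ V) : Submodule ℝ V where
  carrier := {x | ∀ y ∈ S, Ω x y = 0}
  add_mem' := by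
    intro a b ha hb y hy
    simp [map_add, ha y hy, hb y hy]
  zero_mem' := by simp
  smul_mem' := by
    intro c a ha y hy
    simp [ha y hy]

/-- Pullback of a 2-form along a linear map. -/
def pb (φ : V →ₗ[ℝ] W) (B : W →ₗ[ℝ] Module.Dual ℝ W) : V →ₗ[ℝ] Module.Dual ℝ V :=
  φ.dualMap ∘ₗ B ∘ₗ φ

/-- The Dirac structure associated to a pair `(R, Ω)` of a subspace and a skew form on it. -/
def diracOfForm (R : Submodule ℝ V) (Ω : R →ₗ[ℝ] Module.Dual ℝ R) :
    Submodule ℝ (V × Module.Dual ℝ V) where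
  carrier := {p | ∃ hx : p.1 ∈ R, ∀ y : R, p.2 y = Ω ⟨p.1, hx⟩ y}
  add_mem' := by
    rintro a b ⟨ha, Ha⟩ ⟨hb, Hb⟩
    refine ⟨R.add_mem ha hb, fun y => ?_⟩
    have h : (⟨(a + b).1, R.add_mem ha hb⟩ : R) = ⟨a.1, ha⟩ + ⟨b.1, hb⟩ := rfl
    rw [h, map_add]
    simp [Prod.snd_add, Ha y, Hb y]
  zero_mem' := by
    refine ⟨R.zero_mem, fun y => ?_⟩
    have h : (⟨((0 : V × Module.Dual ℝ V)).1, R.zero_mem⟩ : R) = 0 := rfl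
    rw [h, map_zero]
    rfl
  smul_mem' := by
    rintro c a ⟨ha, Ha⟩
    refine ⟨R.smul_mem c ha, fun y => ?_⟩
    have h : (⟨(c • a).1, R.smul_mem c ha⟩ : R) = c • ⟨a.1, ha⟩ := rfl
    rw [h, map_smul]
    simp [Prod.smul_snd, Ha y]

section BackwardForward

variable {E F : Type*} [AddCommGroup E] [Module ℝ E] [AddCommGroup F] [Module ℝ F]
  {φ : E →ₗ[ℝ] F}

theorem Bwd_Fwd_le_of_injective (hφ : Function.Injective φ)
    (L : Submodule ℝ (E × Module.Dual ℝ E)) : Bwd φ (Fwd φ L) ≤ L := by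
  rintro ⟨x, ξ⟩ ⟨η, rfl, x', hx', hL⟩
  obtain rfl := hφ hx'
  exact hL

theorem le_Bwd_Fwd_of_surjective_dualMap (hφ : Function.Surjective φ.dualMap)
    (L : Submodule ℝ (E × Module.Dual ℝ E)) : L ≤ Bwd φ (Fwd φ L) := by
  rintro ⟨x, ξ⟩ hL
  obtain ⟨η, rfl⟩ := hφ ξ
  exact ⟨η, rfl, x, rfl, hL⟩

end BackwardForward

theorem stmt_6_general (φ : V →ₗ[ℝ] W) (hφ : Function.Injective φ)
    (L : Submodule ℝ (V × Module.Dual ℝ V)) :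
    Bwd φ (Fwd φ L) = L :=
  le_antisymm (Bwd_Fwd_le_of_injective hφ L)
    (le_Bwd_Fwd_of_surjective_dualMap (dualMap_surjective_of_injective hφ) L)

/-- If `φ` is injective then `𝔅φ ∘ 𝔉φ = id` on Dirac structures. -/
theorem stmt_6 (φ : V →ₗ[ℝ] W) (hφ : Function.Injective φ)
    (L : Submodule ℝ (V × Module.Dual ℝ V)) (hL : IsDirac L) :
    Bwd φ (Fwd φ L) = L :=
  stmt_6_general φ hφ L
end

section
/- Let φ: V → W be a surjective linear map. Then for every Dirac structure L on W, 𝔉φ(𝔅φ(L)) = L, where 𝔉φ and 𝔅φ are the forward and backward images of Dirac structures along φ. -/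
open Module LinearMap

variable {V W U : Type*} [AddCommGroup V] [Module ℝ V] [FiniteDimensional ℝ V]
  [AddCommGroup W] [Module ℝ W] [FiniteDimensional ℝ W]
  [AddCommGroup U] [Module ℝ U] [FiniteDimensional ℝ U]

omit [FiniteDimensional ℝ V] [FiniteDimensional ℝ W] in
theorem le_fwd_bwd_of_surjective {φ : V →ₗ[ℝ] W} (hφ : Function.Surjective φ)
    (L : Submodule ℝ (W × Module.Dual ℝ W)) : L ≤ Fwd φ (Bwd φ L) := by
  rintro ⟨w, η⟩ hwη
  obtain ⟨x, rfl⟩ := hφ w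
  exact ⟨x, rfl, η, rfl, hwη⟩

omit [FiniteDimensional ℝ V] [FiniteDimensional ℝ W] in
theorem fwd_bwd_le_of_injective_dualMap {φ : V →ₗ[ℝ] W} (hφ : Function.Injective φ.dualMap)
    (L : Submodule ℝ (W × Module.Dual ℝ W)) : Fwd φ (Bwd φ L) ≤ L := by
  rintro ⟨w, ξ⟩ ⟨x, rfl, η, hξη, hxη⟩
  rwa [← hφ hξη] at hxη

theorem stmt_7_general (φ : V →ₗ[ℝ] W) (hφ : Function.Surjective φ)
    (L : Submodule ℝ (W × Module.Dual ℝ W)) :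
    Fwd φ (Bwd φ L) = L :=
  le_antisymm (fwd_bwd_le_of_injective_dualMap (dualMap_injective_of_surjective hφ) L)
    (le_fwd_bwd_of_surjective hφ L)

/-- If `φ` is surjective then `𝔉φ ∘ 𝔅φ = id` on Dirac structures. -/
theorem stmt_7 (φ : V →ₗ[ℝ] W) (hφ : Function.Surjective φ)
    (L : Submodule ℝ (W × Module.Dual ℝ W)) (hL : IsDirac L) :
    Fwd φ (Bwd φ L) = L :=
  stmt_7_general φ hφ L
end

section
/- Let L be a Dirac structure on V and φ: V → W linear. Then the Ω_L-orthogonal of ker φ ∩ ρ(L) inside ρ(L) equals {x ∈ V : there exists η ∈ W* with (x, φ*η) ∈ L}. Here the Ω_L-orthogonal of a subspace S ⊆ ρ(L) is {x ∈ ρ(L) : Ω_L(x,y) = 0 for all y ∈ S}. -/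
open Module LinearMap

variable {V W U : Type*} [AddCommGroup V] [Module ℝ V] [FiniteDimensional ℝ V]
  [AddCommGroup W] [Module ℝ W] [FiniteDimensional ℝ W]
  [AddCommGroup U] [Module ℝ U] [FiniteDimensional ℝ U]

/-!
On `ρ(L)`, a functional `η` vanishing on `ker φ ∩ ρ(L)` factors through `φ` as `μ ∘ φ`. Then
`φ*μ - η` annihilates `ρ(L)`, and by maximality of `L` every such covector `ξ` has `(0, ξ) ∈ L`;
adding it to `(x, η)` gives `(x, φ*μ) ∈ L`.
-/

theorem Module.Dual.exists_comp_eq_on_of_vanishes_on_ker {K M N : Type*} [Field K]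
    [AddCommGroup M] [Module K M] [AddCommGroup N] [Module K N] (S : Submodule K M)
    (φ : M →ₗ[K] N) (η : Module.Dual K M) (hη : ∀ y ∈ S, φ y = 0 → η y = 0) :
    ∃ μ : Module.Dual K N, ∀ y ∈ S, μ (φ y) = η y := by
  have hmem : η ∘ₗ S.subtype ∈ LinearMap.range (φ ∘ₗ S.subtype).dualMap := by
    rw [range_dualMap_eq_dualAnnihilator_ker, Submodule.mem_dualAnnihilator]
    exact fun y hy => hη y y.2 hy
  obtain ⟨μ, hμ⟩ := hmem
  exact ⟨μ, fun y hy => LinearMap.congr_fun hμ ⟨y, hy⟩⟩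

theorem IsDirac.zero_prod_mem {E : Type*} [AddCommGroup E] [Module ℝ E]
    {L : Submodule ℝ (E × Module.Dual ℝ E)} (hL : IsDirac L)
    {ξ : Module.Dual ℝ E} (hξ : ∀ p ∈ L, ξ p.1 = 0) : ((0 : E), ξ) ∈ L := by
  have hiso : IsIsotropic (L ⊔ Submodule.span ℝ {((0 : E), ξ)}) := by
    intro p hp q hq
    obtain ⟨u, hu, p', hp', rfl⟩ := Submodule.mem_sup.mp hp
    obtain ⟨v, hv, q', hq', rfl⟩ := Submodule.mem_sup.mp hq
    obtain ⟨a, rfl⟩ := Submodule.mem_span_singleton.mp hp'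
    obtain ⟨b, rfl⟩ := Submodule.mem_span_singleton.mp hq'
    have huv := hL.1 u hu v hv
    simp only [diracPairing, Prod.fst_add, Prod.snd_add, Prod.smul_fst, Prod.smul_snd, smul_zero,
      add_zero, LinearMap.add_apply, LinearMap.smul_apply, smul_eq_mul, hξ u hu, hξ v hv] at huv ⊢
    linarith
  rw [← hL.2 _ hiso le_sup_left]
  exact Submodule.mem_sup_right (Submodule.mem_span_singleton_self _)

/-- The `Ω_L`-orthogonal of `ker φ ∩ ρ(L)` in `ρ(L)` equals
`{x : ∃ η ∈ W*, (x, φ*η) ∈ L}`. -/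
theorem stmt_16 (L : Submodule ℝ (V × Module.Dual ℝ V)) (hL : IsDirac L)
    (φ : V →ₗ[ℝ] W) :
    ∀ x : V,
      ((∃ η : Module.Dual ℝ V, (x, η) ∈ L ∧
          ∀ y : V, φ y = 0 → (∃ μ, (y, μ) ∈ L) → η y = 0) ↔
        ∃ η : Module.Dual ℝ W, (x, φ.dualMap η) ∈ L) := by
  intro x
  constructor
  · rintro ⟨η, hxη, hη⟩
    obtain ⟨μ, hμ⟩ := Module.Dual.exists_comp_eq_on_of_vanishes_on_ker
      (L.map (LinearMap.fst ℝ V (Module.Dual ℝ V))) φ η fun y ⟨p, hp, hpy⟩ hy =>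
        hη y hy ⟨p.2, by rw [← hpy]; exact hp⟩
    have hcorr : ((0 : V), φ.dualMap μ - η) ∈ L :=
      hL.zero_prod_mem fun p hp => by simp [hμ p.1 ⟨p, hp, rfl⟩]
    exact ⟨μ, by simpa using L.add_mem hxη hcorr⟩
  · rintro ⟨μ, hμ⟩
    exact ⟨φ.dualMap μ, hμ, fun y hy _ => by simp [hy]⟩
end
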